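/- arXiv:2602.14403 — 2 statements merged into one kernel-verified Lean document; each statement's English description precedes it below -/
import Mathlib

section
/- Let μ be a probability measure on ℝ^d with mean M(μ) = ∫ x dμ(x) and suppose the weight function w : ℝ^d → ℝ satisfies 0 < a ≤ w(x) ≤ b for all x in the support of μ. Define the weighted mean M_w(μ) = (∫ x w(x) dμ(x)) / (∫ w(x) dμ(x)). Then for any p ≥ 1, |M(μ) - M_w(μ)|^p ≤ (b/a) · ∫ |x - M(μ)|^p dμ(x). -/
open MeasureTheory
open scoped NNReal ENNReal

lemma convexOn_univ_norm_rpow {E : Type*} [NormedAddCommGroup E] [NormedSpace ℝ E] {p : ℝ}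
    (hp : 1 ≤ p) : ConvexOn ℝ Set.univ (fun x : E => ‖x‖ ^ p) := by
  refine ⟨convex_univ, fun x _ y _ c e hc he hce => ?_⟩
  have h1 : ‖c • x + e • y‖ ^ p ≤ (c * ‖x‖ + e * ‖y‖) ^ p := by
    apply Real.rpow_le_rpow (norm_nonneg _) _ (le_trans zero_le_one hp)
    calc ‖c • x + e • y‖ ≤ ‖c • x‖ + ‖e • y‖ := norm_add_le _ _
      _ = c * ‖x‖ + e * ‖y‖ := by
          rw [norm_smul, norm_smul, Real.norm_eq_abs, Real.norm_eq_abs,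
            abs_of_nonneg hc, abs_of_nonneg he]
  refine h1.trans ?_
  exact (convexOn_rpow hp).2 (Set.mem_Ici.2 (norm_nonneg x)) (Set.mem_Ici.2 (norm_nonneg y))
    hc he hce

/-- The weighted mean deviates from the mean by at most `(b/a)^(1/p)` times the
`p`-th centered moment: `|M(μ) - M_w(μ)|^p ≤ (b/a) ∫ |x - M(μ)|^p dμ`. -/
theorem stmt_0 (d : ℕ) (μ : Measure (EuclideanSpace ℝ (Fin d))) [IsProbabilityMeasure μ]
    (w : EuclideanSpace ℝ (Fin d) → ℝ) (a b p : ℝ)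
    (ha : 0 < a) (hab : a ≤ b) (hp : 1 ≤ p)
    (hw : ∀ᵐ x ∂μ, a ≤ w x ∧ w x ≤ b)
    (hwmeas : Measurable w)
    (hid : Integrable id μ)
    (hwx : Integrable (fun x => w x • x) μ)
    (hmom : Integrable (fun x => ‖x - ∫ y, y ∂μ‖ ^ p) μ) :
    ‖(∫ y, y ∂μ) - (∫ x, w x ∂μ)⁻¹ • (∫ x, w x • x ∂μ)‖ ^ p
      ≤ (b / a) * ∫ x, ‖x - ∫ y, y ∂μ‖ ^ p ∂μ := by
  set M : EuclideanSpace ℝ (Fin d) := ∫ y, y ∂μ with hM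
  set W : ℝ := ∫ x, w x ∂μ with hWdef
  -- integrability of w
  have hwint : Integrable w μ := by
    refine Integrable.mono' (integrable_const b) hwmeas.aestronglyMeasurable ?_
    filter_upwards [hw] with x hx
    rw [Real.norm_eq_abs, abs_of_nonneg (le_trans ha.le hx.1)]
    exact hx.2
  have haW : a ≤ W := by
    have : ∫ _x, a ∂μ ≤ ∫ x, w x ∂μ :=
      integral_mono_ae (integrable_const a) hwint (hw.mono fun x hx => hx.1)
    simpa using this
  have hWb : W ≤ b := by
    have : ∫ x, w x ∂μ ≤ ∫ _x, b ∂μ :=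
      integral_mono_ae hwint (integrable_const b) (hw.mono fun x hx => hx.2)
    simpa using this
  have hW0 : 0 < W := lt_of_lt_of_le ha haW
  -- the tilted probability measure
  set ρ : EuclideanSpace ℝ (Fin d) → ℝ≥0 := fun x => Real.toNNReal (w x / W) with hρ
  have hρmeas : Measurable ρ := (hwmeas.div_const W).real_toNNReal
  set ν : Measure (EuclideanSpace ℝ (Fin d)) := μ.withDensity (fun x => (ρ x : ℝ≥0∞)) with hν
  have hcoe : ∀ᵐ x ∂μ, ((ρ x : ℝ)) = w x / W := by
    filter_upwards [hw] with x hx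
    exact Real.coe_toNNReal _ (div_nonneg (le_trans ha.le hx.1) hW0.le)
  have hνprob : IsProbabilityMeasure ν := by
    constructor
    rw [hν, withDensity_apply _ MeasurableSet.univ, Measure.restrict_univ]
    have hint : Integrable (fun x => w x / W) μ := hwint.div_const W
    have hnn : 0 ≤ᵐ[μ] fun x => w x / W := by
      filter_upwards [hw] with x hx
      exact div_nonneg (le_trans ha.le hx.1) hW0.le
    have h1 : ∫⁻ x, ENNReal.ofReal (w x / W) ∂μ = ENNReal.ofReal (∫ x, w x / W ∂μ) :=
      (ofReal_integral_eq_lintegral_ofReal hint hnn).symm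
    have h2 : ∫ x, w x / W ∂μ = 1 := by
      rw [integral_div]
      field_simp
      exact hWdef.symm
    have h3 : ∀ x, ((ρ x : ℝ≥0∞)) = ENNReal.ofReal (w x / W) := fun x => rfl
    simp only [h3, h1, h2, ENNReal.ofReal_one]
  -- integrability under ν
  have hintf : Integrable (fun x => x - M) ν := by
    rw [hν, integrable_withDensity_iff_integrable_smul hρmeas]
    have : Integrable (fun x => W⁻¹ • (w x • x - w x • M)) μ :=
      ((hwx.sub (hwint.smul_const M)).smul W⁻¹)
    apply this.congr
    filter_upwards [hcoe] with x hx
    rw [NNReal.smul_def, hx, smul_sub, smul_sub, smul_smul, smul_smul, div_eq_inv_mul]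
  have hsmulmom : Integrable (fun x => ρ x • ‖x - M‖ ^ p) μ := by
    refine Integrable.mono' (hmom.const_mul (b / W)) ?_ ?_
    · exact ((hρmeas.coe_nnreal_real.aestronglyMeasurable).mul hmom.aestronglyMeasurable)
    · filter_upwards [hw, hcoe] with x hx hcx
      have hr : (0:ℝ) ≤ ‖x - M‖ ^ p := Real.rpow_nonneg (norm_nonneg _) p
      rw [NNReal.smul_def, smul_eq_mul, Real.norm_eq_abs, abs_mul, abs_of_nonneg hr, hcx,
        abs_of_nonneg (div_nonneg (le_trans ha.le hx.1) hW0.le)]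
      exact mul_le_mul_of_nonneg_right
        (div_le_div₀ (le_trans ha.le (hab.trans (le_refl b))) hx.2 hW0 (le_refl W)) hr
  have hintg : Integrable (fun x => ‖x - M‖ ^ p) ν := by
    rw [hν, integrable_withDensity_iff_integrable_smul hρmeas]
    exact hsmulmom
  -- Jensen
  have hjensen : ‖∫ x, (x - M) ∂ν‖ ^ p ≤ ∫ x, ‖x - M‖ ^ p ∂ν := by
    have := (convexOn_univ_norm_rpow (E := EuclideanSpace ℝ (Fin d)) hp).map_integral_le (μ := ν)
      (f := fun x => x - M)
      ((continuous_norm.rpow_const (fun x => Or.inr (le_trans zero_le_one hp))).continuousOn)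
      isClosed_univ (Filter.Eventually.of_forall fun x => Set.mem_univ _) hintf
      (by simpa [Function.comp_def] using hintg)
    simpa [Function.comp] using this
  -- compute ∫ x dν
  have hidν : Integrable (fun x : EuclideanSpace ℝ (Fin d) => x) ν := by
    have := hintf.add (integrable_const M)
    apply this.congr
    filter_upwards with x; simp
  have hmeanν : ∫ x, (x - M) ∂ν = W⁻¹ • (∫ x, w x • x ∂μ) - M := by
    have h1 : ∫ x, (x - M) ∂ν = (∫ x, x ∂ν) - M := by
      rw [integral_sub hidν (integrable_const M), integral_const, measureReal_def, measure_univ, ENNReal.toReal_one,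
        one_smul]
    rw [h1]
    congr 1
    rw [hν, integral_withDensity_eq_integral_smul hρmeas, ← integral_smul W⁻¹]
    apply integral_congr_ae
    filter_upwards [hcoe] with x hx
    rw [NNReal.smul_def, hx, div_eq_mul_inv, mul_comm (w x), mul_smul]
  -- bound the right side
  have hrhs : ∫ x, ‖x - M‖ ^ p ∂ν ≤ (b / a) * ∫ x, ‖x - M‖ ^ p ∂μ := by
    rw [hν, integral_withDensity_eq_integral_smul hρmeas, ← integral_const_mul]
    apply integral_mono_ae hsmulmom (hmom.const_mul (b / a))
    filter_upwards [hw, hcoe] with x hx hcx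
    have hr : (0:ℝ) ≤ ‖x - M‖ ^ p := Real.rpow_nonneg (norm_nonneg _) p
    rw [NNReal.smul_def, smul_eq_mul, hcx]
    exact mul_le_mul_of_nonneg_right
      (div_le_div₀ (le_trans ha.le hab) hx.2 ha haW) hr
  -- put it together
  have hkey : ‖M - W⁻¹ • (∫ x, w x • x ∂μ)‖ ^ p = ‖∫ x, (x - M) ∂ν‖ ^ p := by
    rw [hmeanν, ← norm_neg]
    congr 2
    abel
  calc ‖M - W⁻¹ • (∫ x, w x • x ∂μ)‖ ^ p
      = ‖∫ x, (x - M) ∂ν‖ ^ p := hkey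
    _ ≤ ∫ x, ‖x - M‖ ^ p ∂ν := hjensen
    _ ≤ (b / a) * ∫ x, ‖x - M‖ ^ p ∂μ := hrhs
end

section
/- Let μ₁, ν₁ be probability measures on B(0,R) ⊂ ℝ^{d₁} and μ₂ a probability measure on B(0,R) ⊂ ℝ^{d₂}. Suppose ℰ is bounded between ℰ_min and ℰ_max on B(0,R) × B(0,R). Then |M(μ₁) - 𝓜_α(μ₁, μ₂)| ≤ e^{α(ℰ_max - ℰ_min)} √Var(μ₁), where 𝓜_α(μ₁,μ₂) = (∫ x e^{-αℰ(x, M(μ₂))} dμ₁(x)) / (∫ e^{-αℰ(x, M(μ₂))} dμ₁(x)) and Var(μ₁) = ∫|x - M(μ₁)|² dμ₁(x). -/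
open MeasureTheory

/-- The consensus point deviates from the mean by at most the standard deviation
times the ratio of extreme weights: Lemma 4.1 (mean-consensus), case `p = 2`. -/
theorem stmt_18 (d₁ d₂ : ℕ) (R α Emin Emax : ℝ) (hR : 0 < R) (hα : 0 < α)
    (ℰ : EuclideanSpace ℝ (Fin d₁) → EuclideanSpace ℝ (Fin d₂) → ℝ)
    (hcont : Continuous fun p : EuclideanSpace ℝ (Fin d₁) × EuclideanSpace ℝ (Fin d₂) =>
      ℰ p.1 p.2)
    (μ₁ : Measure (EuclideanSpace ℝ (Fin d₁))) [IsProbabilityMeasure μ₁]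
    (μ₂ : Measure (EuclideanSpace ℝ (Fin d₂))) [IsProbabilityMeasure μ₂]
    (hs₁ : ∀ᵐ x ∂μ₁, ‖x‖ ≤ R) (hs₂ : ∀ᵐ y ∂μ₂, ‖y‖ ≤ R)
    (hbound : ∀ x y, ‖x‖ ≤ R → ‖y‖ ≤ R → Emin ≤ ℰ x y ∧ ℰ x y ≤ Emax) :
    ‖(∫ x, x ∂μ₁) - (∫ x, Real.exp (-α * ℰ x (∫ y, y ∂μ₂)) ∂μ₁)⁻¹ •
        (∫ x, Real.exp (-α * ℰ x (∫ y, y ∂μ₂)) • x ∂μ₁)‖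
      ≤ Real.exp (α * (Emax - Emin)) *
        Real.sqrt (∫ x, ‖x - ∫ y, y ∂μ₁‖ ^ 2 ∂μ₁) := by
  set m₂ := ∫ y, y ∂μ₂ with hm₂def
  set m := ∫ x, x ∂μ₁ with hmdef
  set f : EuclideanSpace ℝ (Fin d₁) → ℝ := fun x => Real.exp (-α * ℰ x m₂) with hfdef
  have hfc : Continuous f :=
    Real.continuous_exp.comp
      (continuous_const.mul (hcont.comp (continuous_id.prodMk continuous_const)))
  have hfpos : ∀ x, 0 < f x := fun x => Real.exp_pos _
  -- mean of μ₂ is in the ball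
  have hint₂ : Integrable (fun y => y) μ₂ :=
    (integrable_const R).mono' aestronglyMeasurable_id hs₂
  have hm₂R : ‖m₂‖ ≤ R := by
    calc ‖m₂‖ ≤ ∫ y, ‖y‖ ∂μ₂ := norm_integral_le_integral_norm _
    _ ≤ ∫ _, R ∂μ₂ := integral_mono_ae hint₂.norm (integrable_const R) hs₂
    _ = R := by simp
  have hE : ∀ᵐ x ∂μ₁, Emin ≤ ℰ x m₂ ∧ ℰ x m₂ ≤ Emax :=
    hs₁.mono fun x hx => hbound x m₂ hx hm₂R
  have hflb : ∀ᵐ x ∂μ₁, Real.exp (-α * Emax) ≤ f x :=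
    hE.mono fun x hx => Real.exp_le_exp.2 (by nlinarith [hx.2])
  have hfub : ∀ᵐ x ∂μ₁, f x ≤ Real.exp (-α * Emin) :=
    hE.mono fun x hx => Real.exp_le_exp.2 (by nlinarith [hx.1])
  have hfint : Integrable f μ₁ :=
    (integrable_const (Real.exp (-α * Emin))).mono' hfc.aestronglyMeasurable
      (hfub.mono fun x hx => by
        rw [Real.norm_eq_abs, abs_of_pos (hfpos x)]; exact hx)
  have hZlb : Real.exp (-α * Emax) ≤ ∫ x, f x ∂μ₁ := by
    calc Real.exp (-α * Emax) = ∫ _, Real.exp (-α * Emax) ∂μ₁ := by simp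
    _ ≤ ∫ x, f x ∂μ₁ := integral_mono_ae (integrable_const _) hfint hflb
  have hZpos : 0 < ∫ x, f x ∂μ₁ := lt_of_lt_of_le (Real.exp_pos _) hZlb
  have hintx : Integrable (fun x => x) μ₁ :=
    (integrable_const R).mono' aestronglyMeasurable_id hs₁
  have hintfx : Integrable (fun x => f x • x) μ₁ :=
    (integrable_const (Real.exp (-α * Emin) * R)).mono'
      (hfc.aestronglyMeasurable.smul aestronglyMeasurable_id)
      ((hfub.and hs₁).mono fun x hx => by
        rw [norm_smul, Real.norm_eq_abs, abs_of_pos (hfpos x)]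
        exact mul_le_mul hx.1 hx.2 (norm_nonneg x) (Real.exp_pos _).le)
  -- algebraic identity
  have key : m - (∫ x, f x ∂μ₁)⁻¹ • (∫ x, f x • x ∂μ₁)
      = (∫ x, f x ∂μ₁)⁻¹ • (∫ x, f x • (m - x) ∂μ₁) := by
    have h1 : (∫ x, f x • (m - x) ∂μ₁) = (∫ x, f x ∂μ₁) • m - ∫ x, f x • x ∂μ₁ := by
      have : (∫ x, f x • (m - x) ∂μ₁) = (∫ x, f x • m ∂μ₁) - ∫ x, f x • x ∂μ₁ := by
        rw [← integral_sub (hfint.smul_const m) hintfx]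
        congr 1; ext x; rw [smul_sub]
      rw [this, integral_smul_const]
    rw [h1, smul_sub, inv_smul_smul₀ hZpos.ne']
  rw [key]
  -- norm bound
  have hg_int : Integrable (fun x => ‖m - x‖) μ₁ := ((integrable_const m).sub hintx).norm
  have hg2_int : Integrable (fun x => ‖m - x‖ ^ 2) μ₁ := by
    have : Integrable (fun x => (2 * R) * (2 * R)) μ₁ := integrable_const _
    refine this.mono' ((continuous_norm.comp (continuous_const.sub continuous_id)).pow 2).aestronglyMeasurable ?_
    refine hs₁.mono fun x hx => ?_
    have hm : ‖m‖ ≤ R := by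
      calc ‖m‖ ≤ ∫ x, ‖x‖ ∂μ₁ := norm_integral_le_integral_norm _
      _ ≤ ∫ _, R ∂μ₁ := integral_mono_ae hintx.norm (integrable_const R) hs₁
      _ = R := by simp
    have h2 : ‖m - x‖ ≤ 2 * R := by
      calc ‖m - x‖ ≤ ‖m‖ + ‖x‖ := norm_sub_le _ _
      _ ≤ 2 * R := by linarith
    rw [Real.norm_eq_abs, abs_of_nonneg (by positivity), sq]
    exact mul_le_mul h2 h2 (norm_nonneg _) (by linarith)
  -- Cauchy–Schwarz: (∫ g)² ≤ ∫ g²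
  have hCS : (∫ x, ‖m - x‖ ∂μ₁) ≤ Real.sqrt (∫ x, ‖m - x‖ ^ 2 ∂μ₁) := by
    set c := ∫ x, ‖m - x‖ ∂μ₁ with hc
    have hvar : 0 ≤ (∫ x, ‖m - x‖ ^ 2 ∂μ₁) - c ^ 2 := by
      have hnn : 0 ≤ ∫ x, (‖m - x‖ - c) ^ 2 ∂μ₁ :=
        integral_nonneg fun x => sq_nonneg _
      have hexp : (∫ x, (‖m - x‖ - c) ^ 2 ∂μ₁)
          = (∫ x, ‖m - x‖ ^ 2 ∂μ₁) - c ^ 2 := by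
        have : (fun x => (‖m - x‖ - c) ^ 2)
            = fun x => ‖m - x‖ ^ 2 - (2 * c) * ‖m - x‖ + c ^ 2 := by
          ext x; ring
        rw [this]
        have h1 : Integrable (fun x => ‖m - x‖ ^ 2 - 2 * c * ‖m - x‖) μ₁ :=
          hg2_int.sub (hg_int.const_mul _)
        rw [integral_add h1 (integrable_const _),
          integral_sub hg2_int (hg_int.const_mul _), integral_const_mul]
        simp only [integral_const, probReal_univ, ENNReal.toReal_one, smul_eq_mul, one_mul]
        ring
      linarith [hexp ▸ hnn]
    have hcnn : 0 ≤ c := integral_nonneg fun x => norm_nonneg _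
    have := Real.sqrt_le_sqrt (by linarith : c ^ 2 ≤ ∫ x, ‖m - x‖ ^ 2 ∂μ₁)
    rwa [Real.sqrt_sq hcnn] at this
  have hbound1 : ‖∫ x, f x • (m - x) ∂μ₁‖
      ≤ Real.exp (-α * Emin) * ∫ x, ‖m - x‖ ∂μ₁ := by
    calc ‖∫ x, f x • (m - x) ∂μ₁‖ ≤ ∫ x, ‖f x • (m - x)‖ ∂μ₁ :=
        norm_integral_le_integral_norm _
    _ ≤ ∫ x, Real.exp (-α * Emin) * ‖m - x‖ ∂μ₁ := by
        have hintfd : Integrable (fun x => f x • (m - x)) μ₁ := by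
          have := (hfint.smul_const m).sub hintfx
          refine this.congr (ae_of_all _ fun x => ?_)
          simp [smul_sub]
        refine integral_mono_ae hintfd.norm (hg_int.const_mul _) ?_
        refine hfub.mono fun x hx => ?_
        show ‖f x • (m - x)‖ ≤ Real.exp (-α * Emin) * ‖m - x‖
        rw [norm_smul, Real.norm_eq_abs, abs_of_pos (hfpos x)]
        exact mul_le_mul_of_nonneg_right hx (norm_nonneg _)
    _ = Real.exp (-α * Emin) * ∫ x, ‖m - x‖ ∂μ₁ := integral_const_mul _ _
  rw [norm_smul, Real.norm_eq_abs, abs_of_pos (inv_pos.2 hZpos)]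
  have hS : (∫ x, ‖m - x‖ ∂μ₁) ≤ Real.sqrt (∫ x, ‖x - m‖ ^ 2 ∂μ₁) := by
    simpa [norm_sub_rev] using hCS
  have hSnn : 0 ≤ Real.sqrt (∫ x, ‖x - m‖ ^ 2 ∂μ₁) := Real.sqrt_nonneg _
  have hZinv : (∫ x, f x ∂μ₁)⁻¹ ≤ Real.exp (α * Emax) := by
    have : Real.exp (α * Emax) = (Real.exp (-α * Emax))⁻¹ := by
      rw [← Real.exp_neg]; ring_nf
    rw [this]
    exact inv_anti₀ (Real.exp_pos _) hZlb
  calc (∫ x, f x ∂μ₁)⁻¹ * ‖∫ x, f x • (m - x) ∂μ₁‖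
      ≤ Real.exp (α * Emax) * (Real.exp (-α * Emin) * Real.sqrt (∫ x, ‖x - m‖ ^ 2 ∂μ₁)) := by
        refine mul_le_mul hZinv ?_ (norm_nonneg _) (Real.exp_pos _).le
        calc ‖∫ x, f x • (m - x) ∂μ₁‖ ≤ Real.exp (-α * Emin) * ∫ x, ‖m - x‖ ∂μ₁ := hbound1
        _ ≤ Real.exp (-α * Emin) * Real.sqrt (∫ x, ‖x - m‖ ^ 2 ∂μ₁) :=
            mul_le_mul_of_nonneg_left hS (Real.exp_pos _).le
    _ = Real.exp (α * (Emax - Emin)) * Real.sqrt (∫ x, ‖x - m‖ ^ 2 ∂μ₁) := by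
        rw [← mul_assoc, ← Real.exp_add]; ring_nf
end
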